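/- arXiv:2101.05526 — 3 statements merged into one kernel-verified Lean document; each statement's English description precedes it below -/
import Mathlib

section
/- Let $(X_t)_{t\ge 0}$ be a Markov chain on a finite state space $\{s_1,\dots,s_n\}$ with transition matrix $(p_{i,j})$ where all $p_{i,j}>0$, and with stationary distribution $(\sigma_i)$ where all $\sigma_i>0$. Let $\alpha=\min_{i,j,k} p_{i,j}/\sigma_k$ and $\beta=\max_{i,j,k} p_{i,j}/\sigma_k$. Then for all $t \ge 2 + 2\alpha^{-1}\log\beta$ and every state $i$, $|\Pr[X_t=s_i] - \sigma_i| \le (1-\alpha/2)^t\,\sigma_i$. -/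
/-- Markov chain mixing: with `α = min p i j / σ k` and
`β = max p i j / σ k`, for all `t ≥ 2 + 2 α⁻¹ log β` and every state `i`,
`|Pr[X_t = s_i] - σ i| ≤ (1 - α/2)^t σ i`. -/
theorem stmt1 (n : ℕ) (hn : 1 ≤ n)
    (p : Fin n → Fin n → ℝ) (hp : ∀ i j, 0 < p i j)
    (hrow : ∀ i, ∑ j, p i j = 1)
    (σ : Fin n → ℝ) (hσpos : ∀ i, 0 < σ i) (hσsum : ∑ i, σ i = 1)
    (hstat : ∀ j, ∑ i, σ i * p i j = σ j)
    (μ : ℕ → Fin n → ℝ) (hμ0 : ∀ i, 0 ≤ μ 0 i) (hμsum : ∑ i, μ 0 i = 1)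
    (hμ : ∀ t j, μ (t + 1) j = ∑ i, μ t i * p i j)
    (α β : ℝ)
    (hα : α = ⨅ x : Fin n × Fin n × Fin n, p x.1 x.2.1 / σ x.2.2)
    (hβ : β = ⨆ x : Fin n × Fin n × Fin n, p x.1 x.2.1 / σ x.2.2) :
    ∀ t : ℕ, 2 + 2 * α⁻¹ * Real.log β ≤ (t : ℝ) →
      ∀ i : Fin n, |μ t i - σ i| ≤ (1 - α / 2) ^ t * σ i := by
  have hne : Nonempty (Fin n) := ⟨⟨0, hn⟩⟩
  set f : Fin n × Fin n × Fin n → ℝ := fun x => p x.1 x.2.1 / σ x.2.2 with hf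
  have hfpos : ∀ x, 0 < f x := fun x => div_pos (hp _ _) (hσpos _)
  -- α bounds
  have hαle : ∀ i j k, α ≤ p i j / σ k := by
    intro i j k
    rw [hα]
    exact ciInf_le (Set.Finite.bddBelow (Set.finite_range f)) (i, j, k)
  have hβge : ∀ i j k, p i j / σ k ≤ β := by
    intro i j k
    rw [hβ]
    exact le_ciSup (Set.Finite.bddAbove (Set.finite_range f)) (i, j, k)
  have hα0 : 0 < α := by
    obtain ⟨x0, hx0⟩ := Finite.exists_min f
    have : α = f x0 := le_antisymm (hαle x0.1 x0.2.1 x0.2.2)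
      (hα ▸ le_ciInf hx0)
    rw [this]; exact hfpos x0
  have hαp : ∀ i j, α * σ j ≤ p i j := by
    intro i j
    have := hαle i j j
    rwa [le_div_iff₀ (hσpos j)] at this
  have hpβ : ∀ i j, p i j ≤ β * σ j := by
    intro i j
    have := hβge i j j
    rwa [div_le_iff₀ (hσpos j)] at this
  have hα1 : α ≤ 1 := by
    have h1 : ∑ j, α * σ j ≤ ∑ j, p ⟨0, hn⟩ j := Finset.sum_le_sum fun j _ => hαp _ j
    rw [← Finset.mul_sum, hσsum, mul_one, hrow] at h1
    exact h1
  have hβ1 : 1 ≤ β := by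
    have h1 : ∑ j, p ⟨0, hn⟩ j ≤ ∑ j, β * σ j := Finset.sum_le_sum fun j _ => hpβ _ j
    rw [← Finset.mul_sum, hσsum, mul_one, hrow] at h1
    exact h1
  -- mass is conserved
  have hmass : ∀ t, ∑ i, μ t i = 1 := by
    intro t
    induction t with
    | zero => exact hμsum
    | succ t ih =>
      have : ∑ j, μ (t + 1) j = ∑ j, ∑ i, μ t i * p i j :=
        Finset.sum_congr rfl fun j _ => hμ t j
      rw [this, Finset.sum_comm]
      calc ∑ i, ∑ j, μ t i * p i j = ∑ i, μ t i * ∑ j, p i j := by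
            refine Finset.sum_congr rfl fun i _ => ?_
            rw [Finset.mul_sum]
        _ = 1 := by simp only [hrow, mul_one]; exact ih
  -- key contraction estimate
  have key : ∀ t j, |μ (t + 1) j - σ j| ≤ β * (1 - α) ^ t * σ j := by
    intro t
    induction t with
    | zero =>
      intro j
      have hlow : α * σ j ≤ μ 1 j := by
        rw [hμ 0 j]
        calc α * σ j = ∑ i, μ 0 i * (α * σ j) := by
              rw [← Finset.sum_mul, hμsum, one_mul]
          _ ≤ ∑ i, μ 0 i * p i j :=
              Finset.sum_le_sum fun i _ => mul_le_mul_of_nonneg_left (hαp i j) (hμ0 i)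
      have hhigh : μ 1 j ≤ β * σ j := by
        rw [hμ 0 j]
        calc ∑ i, μ 0 i * p i j ≤ ∑ i, μ 0 i * (β * σ j) :=
              Finset.sum_le_sum fun i _ => mul_le_mul_of_nonneg_left (hpβ i j) (hμ0 i)
          _ = β * σ j := by rw [← Finset.sum_mul, hμsum, one_mul]
      have hσj := hσpos j
      rw [abs_le]
      constructor <;> nlinarith
    | succ t ih =>
      intro j
      have e : μ (t + 2) j - σ j = ∑ i, (μ (t + 1) i - σ i) * (p i j - α * σ j) := by
        have expand : ∀ i : Fin n, (μ (t + 1) i - σ i) * (p i j - α * σ j)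
            = μ (t + 1) i * p i j - μ (t + 1) i * (α * σ j)
              - (σ i * p i j - σ i * (α * σ j)) := by intro i; ring
        rw [Finset.sum_congr rfl fun i _ => expand i]
        rw [Finset.sum_sub_distrib, Finset.sum_sub_distrib, Finset.sum_sub_distrib,
          ← Finset.sum_mul, ← Finset.sum_mul, hstat j, hmass (t + 1), hσsum, ← hμ (t + 1) j]
        ring
      rw [e]
      calc |∑ i, (μ (t + 1) i - σ i) * (p i j - α * σ j)|
          ≤ ∑ i, |(μ (t + 1) i - σ i) * (p i j - α * σ j)| :=
            Finset.abs_sum_le_sum_abs _ _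
        _ = ∑ i, |μ (t + 1) i - σ i| * (p i j - α * σ j) := by
            refine Finset.sum_congr rfl fun i _ => ?_
            rw [abs_mul, abs_of_nonneg (show (0:ℝ) ≤ p i j - α * σ j by linarith [hαp i j])]
        _ ≤ ∑ i, (β * (1 - α) ^ t * σ i) * (p i j - α * σ j) := by
            refine Finset.sum_le_sum fun i _ => ?_
            exact mul_le_mul_of_nonneg_right (ih i) (by linarith [hαp i j])
        _ = β * (1 - α) ^ t * (∑ i, σ i * (p i j - α * σ j)) := by
            rw [Finset.mul_sum]
            refine Finset.sum_congr rfl fun i _ => ?_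
            ring
        _ = β * (1 - α) ^ (t + 1) * σ j := by
            have : ∑ i, σ i * (p i j - α * σ j)
                = (∑ i, σ i * p i j) - (∑ i, σ i) * (α * σ j) := by
              rw [Finset.sum_mul, ← Finset.sum_sub_distrib]
              refine Finset.sum_congr rfl fun i _ => ?_
              ring
            rw [this, hstat j, hσsum]
            ring
  -- conclusion
  intro t ht i
  have hβ0 : 0 < β := lt_of_lt_of_le one_pos hβ1
  have hlogβ : 0 ≤ Real.log β := Real.log_nonneg hβ1
  have hnn : 0 ≤ 2 * α⁻¹ * Real.log β :=
    mul_nonneg (mul_nonneg (by norm_num) (inv_nonneg.mpr hα0.le)) hlogβ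
  have ht2 : (2 : ℝ) ≤ t := le_trans (by linarith) ht
  have ht2' : 2 ≤ t := by exact_mod_cast ht2
  obtain ⟨m, rfl⟩ : ∃ m, t = m + 2 := ⟨t - 2, by omega⟩
  have hb := key (m + 1) i
  have hc0 : (0:ℝ) ≤ 1 - α / 2 := by linarith
  have h1α : (0:ℝ) ≤ 1 - α := by linarith
  -- β * (1-α)^(m+1) ≤ (1 - α/2)^(m+2)
  have step1 : (1 - α) ^ (m + 1) ≤ (1 - α / 2) ^ (m + 2) * (1 - α / 2) ^ m := by
    have h2 : (1 - α) ≤ (1 - α / 2) ^ 2 := by nlinarith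
    calc (1 - α) ^ (m + 1) ≤ ((1 - α / 2) ^ 2) ^ (m + 1) := pow_le_pow_left₀ h1α h2 _
      _ = (1 - α / 2) ^ (m + 2) * (1 - α / 2) ^ m := by rw [← pow_mul, ← pow_add]; ring_nf
  have step2 : β * (1 - α / 2) ^ m ≤ 1 := by
    have hce : 1 - α / 2 ≤ Real.exp (-(α / 2)) := by
      have := Real.add_one_le_exp (-(α / 2))
      linarith
    have hcm : (1 - α / 2) ^ m ≤ Real.exp (-(α / 2)) ^ m := pow_le_pow_left₀ hc0 hce m
    have hβe : β ≤ Real.exp (Real.log β) := le_of_eq (Real.exp_log hβ0).symm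
    calc β * (1 - α / 2) ^ m ≤ Real.exp (Real.log β) * Real.exp (-(α / 2)) ^ m := by
          apply mul_le_mul hβe hcm (by positivity) (Real.exp_pos _).le
      _ = Real.exp (Real.log β + m * (-(α / 2))) := by
          rw [← Real.exp_nat_mul, ← Real.exp_add]
      _ ≤ Real.exp 0 := by
          apply Real.exp_le_exp.mpr
          have hm : 2 * α⁻¹ * Real.log β ≤ m := by
            push_cast at ht ⊢
            linarith
          have h2 : 2 * α⁻¹ * Real.log β * (α / 2) ≤ (m : ℝ) * (α / 2) :=
            mul_le_mul_of_nonneg_right hm (by positivity)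
          have he : 2 * α⁻¹ * Real.log β * (α / 2) = Real.log β := by
            field_simp
          linarith
      _ = 1 := Real.exp_zero
  have hfin : β * (1 - α) ^ (m + 1) ≤ (1 - α / 2) ^ (m + 2) := by
    calc β * (1 - α) ^ (m + 1) ≤ β * ((1 - α / 2) ^ (m + 2) * (1 - α / 2) ^ m) :=
          mul_le_mul_of_nonneg_left step1 hβ0.le
      _ = (1 - α / 2) ^ (m + 2) * (β * (1 - α / 2) ^ m) := by ring
      _ ≤ (1 - α / 2) ^ (m + 2) * 1 := mul_le_mul_of_nonneg_left step2 (by positivity)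
      _ = (1 - α / 2) ^ (m + 2) := mul_one _
  calc |μ (m + 2) i - σ i| ≤ β * (1 - α) ^ (m + 1) * σ i := hb
    _ ≤ (1 - α / 2) ^ (m + 2) * σ i := mul_le_mul_of_nonneg_right hfin (hσpos i).le
end

section
/- Let $\ell\ge 1$ be an integer, $\alpha>0$, and let $D$ be a directed graph on $n$ vertices with vertex set $V$ and arc set $A$ such that $(v,u)\in A$ whenever $(u,v)\in A$. Suppose that for all distinct $s,t\in V$ there are at least $\alpha n^{\ell-1}$ directed paths of length $\ell$ from $s$ to $t$ in $D$. Let $\beta>0$ and let $\xi\colon V\to[-\beta,\beta]$ satisfy $\sum_{v\in V}\xi(v)=0$. Then there exists a function $\eta\colon A\to[0, 2\beta\ell/(\alpha n)]$ such that for every vertex $v$, $\xi(v)+\sum_{u:(u,v)\in A}\eta(u,v)-\sum_{u:(v,u)\in A}\eta(v,u)=0$. -/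
/-!
Let `n = |V|`. Route `ξ s / n` from every vertex `s` to every vertex `t`, spread evenly over the
at least `α n^(ℓ-1)` paths of length `ℓ` from `s` to `t`. The net inflow of the resulting flow `φ`
at `v` is `∑ s, ξ s / n - ξ v = -ξ v`. A fixed arc occupies a fixed position of at most `n^(ℓ-1)`
maps `Fin (ℓ + 1) → V`, hence it is used at most `ℓ n^(ℓ-1)` times by all paths together, each use
carrying at most `β / (n · α n^(ℓ-1))`; so `|φ| ≤ βℓ/(αn)`. Since the digraph is symmetric, the
positive part of `φ u v - φ v u` is a nonnegative flow on the arcs with the same net inflow and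
at most twice the bound.
-/

open Finset

lemma Fintype.card_filter_apply_eq_and_apply_eq {α β : Type*} [Fintype α] [DecidableEq α]
    [Fintype β] [DecidableEq β] {a b : α} (hab : a ≠ b) (x y : β) :
    #{f : α → β | f a = x ∧ f b = y} = Fintype.card β ^ (Fintype.card α - 2) := by
  have key : ({f : α → β | f a = x ∧ f b = y} : Finset _) = Fintype.piFinset
      (Function.update (Function.update (fun _ : α => (univ : Finset β)) a {x}) b {y}) := by
    rw [Fintype.piFinset_update_singleton_eq_filter_piFinset_eq _ _ (by simp [hab.symm]),
      Fintype.piFinset_update_singleton_eq_filter_piFinset_eq (fun _ : α => (univ : Finset β)) _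
        (mem_univ _), filter_filter, Fintype.piFinset_univ]
  rw [key, Fintype.card_piFinset]
  simp [Function.apply_update (fun _ => Finset.card), prod_update_of_mem, hab, sdiff_sdiff_left,
    card_sdiff_of_subset, card_pair hab.symm]

variable {V : Type*}

section Walks

variable [DecidableEq V] {ℓ : ℕ}

def arcCount (f : Fin (ℓ + 1) → V) (u v : V) : ℕ :=
  #{i : Fin ℓ | f i.castSucc = u ∧ f i.succ = v}

lemma arcCount_eq_zero_of_not_adj {A : V → V → Prop} {f : Fin (ℓ + 1) → V}
    (hf : ∀ i : Fin ℓ, A (f i.castSucc) (f i.succ)) {u v : V} (huv : ¬ A u v) :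
    arcCount f u v = 0 := by
  rw [arcCount, card_eq_zero, filter_eq_empty_iff]
  rintro i - ⟨rfl, rfl⟩
  exact huv (hf i)

lemma sum_arcCount_eq [Fintype V] (u v : V) :
    ∑ f : Fin (ℓ + 1) → V, arcCount f u v = ℓ * Fintype.card V ^ (ℓ - 1) := by
  simp only [arcCount, card_filter]
  rw [sum_comm]
  simp only [← card_filter]
  rw [Finset.sum_congr rfl fun i _ => Fintype.card_filter_apply_eq_and_apply_eq
    (Fin.castSucc_lt_succ (i := i)).ne u v]
  simp

end Walks

variable [Fintype V]

def netInflow (φ : V → V → ℝ) (v : V) : ℝ := ∑ u, φ u v - ∑ u, φ v u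

lemma netInflow_sum_mul {ι : Type*} (s : Finset ι) (c : ι → ℝ) (F : ι → V → V → ℝ) (v : V) :
    netInflow (fun u w => ∑ i ∈ s, c i * F i u w) v = ∑ i ∈ s, c i * netInflow (F i) v := by
  simp only [netInflow, mul_sub, sum_sub_distrib, mul_sum]
  rw [sum_comm, sum_comm (s := univ) (t := s)]

lemma exists_nonneg_flow_netInflow_eq {A : V → V → Prop} (hA : ∀ u v, A u v → A v u)
    {φ : V → V → ℝ} (hφA : ∀ u v, ¬ A u v → φ u v = 0) {B : ℝ} (hφB : ∀ u v, |φ u v| ≤ B) :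
    ∃ η : V → V → ℝ, (∀ u v, A u v → η u v ∈ Set.Icc 0 (2 * B)) ∧
      (∀ u v, ¬ A u v → η u v = 0) ∧ ∀ v, netInflow η v = netInflow φ v := by
  refine ⟨fun u v => (φ u v - φ v u)⁺, fun u v _ => ⟨posPart_nonneg _, ?_⟩,
    fun u v huv => ?_, fun v => ?_⟩
  · calc (φ u v - φ v u)⁺ ≤ |φ u v| + |φ v u| :=
          sup_le ((le_abs_self _).trans (abs_sub _ _)) (by positivity)
      _ ≤ 2 * B := by linarith [hφB u v, hφB v u]
  · simp [hφA u v huv, hφA v u fun hvu => huv (hA v u hvu)]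
  · simp only [netInflow, ← sum_sub_distrib]
    refine sum_congr rfl fun u _ => ?_
    rw [← neg_sub (φ u v), posPart_neg, posPart_sub_negPart]

variable [DecidableEq V]

lemma netInflow_arcCount {ℓ : ℕ} (f : Fin (ℓ + 1) → V) (v : V) :
    netInflow (fun u w => (arcCount f u w : ℝ)) v =
      (if f (Fin.last ℓ) = v then 1 else 0) - if f 0 = v then 1 else 0 := by
  have hin : ∑ u, arcCount f u v = #{i : Fin ℓ | f i.succ = v} := by
    rw [card_eq_sum_card_fiberwise (f := fun i : Fin ℓ => f i.castSucc) (t := univ)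
      (fun _ _ => mem_univ _)]
    simp only [arcCount, filter_filter, and_comm]
  have hout : ∑ w, arcCount f v w = #{i : Fin ℓ | f i.castSucc = v} := by
    rw [card_eq_sum_card_fiberwise (f := fun i : Fin ℓ => f i.succ) (t := univ)
      (fun _ _ => mem_univ _)]
    simp only [arcCount, filter_filter]
  have hvisits := (Fin.sum_univ_succ fun k => if f k = v then (1 : ℝ) else 0).symm.trans
    (Fin.sum_univ_castSucc fun k => if f k = v then (1 : ℝ) else 0)
  simp only [netInflow, ← Nat.cast_sum, hin, hout, natCast_card_filter]
  linarith

lemma netInflow_sum_sum_div_card_mul {ξ : V → ℝ} (hξ : ∑ s, ξ s = 0) (F : V → V → V → V → ℝ)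
    (hF : ∀ s t v, netInflow (F s t) v = (if t = v then 1 else 0) - if s = v then 1 else 0)
    (v : V) :
    netInflow (fun u w => ∑ s, ∑ t, ξ s / Fintype.card V * F s t u w) v = -ξ v := by
  have : Nonempty V := ⟨v⟩
  have hn : (Fintype.card V : ℝ) ≠ 0 := by exact_mod_cast Fintype.card_ne_zero
  have := netInflow_sum_mul (univ ×ˢ univ) (fun p : V × V => ξ p.1 / Fintype.card V)
    (fun p => F p.1 p.2) v
  simp only [sum_product] at this
  rw [this]
  simp [hF, mul_sub, sum_sub_distrib, ← sum_div, hξ, mul_div_cancel₀ _ hn]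

variable {A : V → V → Prop} {ℓ : ℕ}

variable (A ℓ) in
open Classical in
noncomputable def pathFinset (s t : V) : Finset (Fin (ℓ + 1) → V) :=
  {f | Function.Injective f ∧ f 0 = s ∧ f (Fin.last ℓ) = t ∧
    ∀ i : Fin ℓ, A (f i.castSucc) (f i.succ)}

lemma mem_pathFinset {s t : V} {f : Fin (ℓ + 1) → V} :
    f ∈ pathFinset A ℓ s t ↔ Function.Injective f ∧ f 0 = s ∧ f (Fin.last ℓ) = t ∧
      ∀ i : Fin ℓ, A (f i.castSucc) (f i.succ) := by
  simp [pathFinset]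

lemma card_pathFinset (s t : V) :
    #(pathFinset A ℓ s t) = Nat.card {f : Fin (ℓ + 1) → V // Function.Injective f ∧ f 0 = s ∧
      f (Fin.last ℓ) = t ∧ ∀ i : Fin ℓ, A (f i.castSucc) (f i.succ)} := by
  classical
  rw [Nat.card_eq_fintype_card, Fintype.card_subtype]
  simp [pathFinset]

lemma pathFinset_self (hℓ : ℓ ≠ 0) (s : V) : pathFinset A ℓ s s = ∅ := by
  refine eq_empty_of_forall_notMem fun f hf => ?_
  obtain ⟨hinj, h0, hlast, -⟩ := mem_pathFinset.1 hf
  exact hℓ (congrArg Fin.val (hinj (h0.trans hlast.symm))).symm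

lemma sum_sum_sum_pathFinset_le (g : (Fin (ℓ + 1) → V) → ℕ) :
    ∑ s, ∑ t, ∑ f ∈ pathFinset A ℓ s t, g f ≤ ∑ f, g f := by
  calc ∑ s, ∑ t, ∑ f ∈ pathFinset A ℓ s t, g f
      ≤ ∑ s, ∑ t, ∑ f ∈ {f ∈ univ | f 0 = s} with f (Fin.last ℓ) = t, g f := by
        gcongr with s _ t _
        intro f hf
        obtain ⟨-, h0, hlast, -⟩ := mem_pathFinset.1 hf
        simp [h0, hlast]
    _ = ∑ f, g f := by simp only [sum_fiberwise]

variable (A ℓ) in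
/-- The unit flow from `s` to `t` spread evenly over the `ℓ`-paths from `s` to `t`;
it is `0` when there is no such path. -/
noncomputable def pathFlow (s t u v : V) : ℝ :=
  (∑ f ∈ pathFinset A ℓ s t, (arcCount f u v : ℝ)) / #(pathFinset A ℓ s t)

lemma pathFlow_nonneg (s t u v : V) : 0 ≤ pathFlow A ℓ s t u v := by
  unfold pathFlow; positivity

lemma pathFlow_self (hℓ : ℓ ≠ 0) (s : V) : pathFlow A ℓ s s = 0 := by
  ext u v
  simp [pathFlow, pathFinset_self hℓ]

lemma pathFlow_eq_zero_of_not_adj (s t : V) {u v : V} (huv : ¬ A u v) :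
    pathFlow A ℓ s t u v = 0 := by
  rw [pathFlow, sum_eq_zero fun f hf => ?_, zero_div]
  rw [arcCount_eq_zero_of_not_adj (mem_pathFinset.1 hf).2.2.2 huv, Nat.cast_zero]

lemma netInflow_pathFlow {s t : V} (hst : (pathFinset A ℓ s t).Nonempty) (v : V) :
    netInflow (pathFlow A ℓ s t) v = (if t = v then 1 else 0) - if s = v then 1 else 0 := by
  have hflow : pathFlow A ℓ s t =
      fun u w => ∑ f ∈ pathFinset A ℓ s t, (#(pathFinset A ℓ s t) : ℝ)⁻¹ * arcCount f u w := by
    ext u w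
    rw [pathFlow, div_eq_inv_mul, mul_sum]
  have hcard : (#(pathFinset A ℓ s t) : ℝ) ≠ 0 := by exact_mod_cast hst.card_pos.ne'
  rw [hflow, netInflow_sum_mul, ← mul_sum, sum_congr rfl fun f hf => ?_, sum_const, nsmul_eq_mul,
    inv_mul_cancel_left₀ hcard]
  obtain ⟨-, h0, hlast, -⟩ := mem_pathFinset.1 hf
  rw [netInflow_arcCount, h0, hlast]

variable (A ℓ) in
noncomputable def balancingFlow (ξ : V → ℝ) (u v : V) : ℝ :=
  ∑ s, ∑ t, ξ s / Fintype.card V * pathFlow A ℓ s t u v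

lemma netInflow_balancingFlow (hℓ : ℓ ≠ 0)
    (hpaths : ∀ s t, s ≠ t → (pathFinset A ℓ s t).Nonempty) {ξ : V → ℝ} (hξ : ∑ s, ξ s = 0)
    (v : V) : netInflow (balancingFlow A ℓ ξ) v = -ξ v := by
  refine netInflow_sum_sum_div_card_mul hξ _ (fun s t w => ?_) v
  rcases eq_or_ne s t with rfl | hst
  · simp [pathFlow_self hℓ, netInflow]
  · exact netInflow_pathFlow (hpaths s t hst) w

lemma balancingFlow_eq_zero_of_not_adj (ξ : V → ℝ) {u v : V} (huv : ¬ A u v) :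
    balancingFlow A ℓ ξ u v = 0 := by
  simp [balancingFlow, pathFlow_eq_zero_of_not_adj _ _ huv]

lemma abs_balancingFlow_le (hℓ : ℓ ≠ 0) {α β : ℝ} (hα : 0 < α)
    (hpaths : ∀ s t, s ≠ t → α * Fintype.card V ^ (ℓ - 1) ≤ #(pathFinset A ℓ s t))
    {ξ : V → ℝ} (hξ : ∀ s, |ξ s| ≤ β) (u v : V) :
    |balancingFlow A ℓ ξ u v| ≤ β * ℓ / (α * Fintype.card V) := by
  set n : ℝ := (Fintype.card V : ℝ)
  have : Nonempty V := ⟨u⟩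
  have hn : 0 < n := by simp [n, Fintype.card_pos]
  have hβ : 0 ≤ β := (abs_nonneg _).trans (hξ u)
  set c := α * n ^ (ℓ - 1)
  have hc : 0 < c := by positivity
  set N : V → V → ℝ := fun s t => ∑ f ∈ pathFinset A ℓ s t, (arcCount f u v : ℝ)
  have hpathFlow : ∀ s t, pathFlow A ℓ s t u v ≤ N s t / c := by
    intro s t
    rcases eq_or_ne s t with rfl | hst
    · simp [N, pathFlow, pathFinset_self hℓ]
    · exact div_le_div_of_nonneg_left (by positivity) hc (hpaths s t hst)
  have hN : ∑ s, ∑ t, N s t ≤ ℓ * n ^ (ℓ - 1) := by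
    simp only [N, ← Nat.cast_sum, n]
    exact_mod_cast (sum_sum_sum_pathFinset_le _).trans_eq (sum_arcCount_eq u v)
  calc |balancingFlow A ℓ ξ u v|
      ≤ ∑ s, ∑ t, |ξ s / n * pathFlow A ℓ s t u v| :=
        (abs_sum_le_sum_abs _ _).trans (sum_le_sum fun s _ => abs_sum_le_sum_abs _ _)
    _ ≤ ∑ s, ∑ t, β / (n * c) * N s t := by
        gcongr with s _ t _
        rw [abs_mul, abs_div, abs_of_pos hn, abs_of_nonneg (pathFlow_nonneg ..)]
        calc |ξ s| / n * pathFlow A ℓ s t u v ≤ β / n * (N s t / c) := by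
              gcongr
              · exact pathFlow_nonneg ..
              · exact hξ s
              · exact hpathFlow s t
          _ = β / (n * c) * N s t := by ring
    _ = β / (n * c) * ∑ s, ∑ t, N s t := by simp only [mul_sum]
    _ ≤ β / (n * c) * (ℓ * n ^ (ℓ - 1)) := by gcongr
    _ = β * ℓ / (α * n) := by simp only [c]; field_simp

theorem stmt3_general (ℓ : ℕ) (hℓ : 1 ≤ ℓ) (α : ℝ) (hα : 0 < α)
    (V : Type) [Fintype V]
    (A : V → V → Prop) (hsym : ∀ u v, A u v → A v u)
    (hpaths : ∀ s t : V, s ≠ t →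
      α * (Fintype.card V : ℝ) ^ (ℓ - 1) ≤
        (Nat.card {f : Fin (ℓ + 1) → V // Function.Injective f ∧ f 0 = s ∧
          f (Fin.last ℓ) = t ∧ ∀ i : Fin ℓ, A (f i.castSucc) (f i.succ)} : ℝ))
    (β : ℝ)
    (ξ : V → ℝ) (hξ : ∀ v, ξ v ∈ Set.Icc (-β) β) (hξ0 : ∑ v, ξ v = 0) :
    ∃ η : V → V → ℝ,
      (∀ u v, A u v → η u v ∈ Set.Icc 0 (2 * β * ℓ / (α * (Fintype.card V : ℝ)))) ∧
      (∀ u v, ¬ A u v → η u v = 0) ∧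
      ∀ v, ξ v + (∑ u, η u v) - (∑ u, η v u) = 0 := by
  classical
  have hℓ0 : ℓ ≠ 0 := Nat.one_le_iff_ne_zero.1 hℓ
  simp only [← card_pathFinset] at hpaths
  have hnonempty : ∀ s t : V, s ≠ t → (pathFinset A ℓ s t).Nonempty := fun s t hst => by
    have : Nonempty V := ⟨s⟩
    exact card_pos.1 (by exact_mod_cast (by positivity : (0 : ℝ) < _).trans_le (hpaths s t hst))
  obtain ⟨η, hηA, hη0, hηφ⟩ := exists_nonneg_flow_netInflow_eq hsym
    (fun _ _ => balancingFlow_eq_zero_of_not_adj ξ)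
    (abs_balancingFlow_le hℓ0 hα hpaths fun s => abs_le.2 (hξ s))
  refine ⟨η, by simpa only [mul_assoc, mul_div_assoc] using hηA, hη0, fun v => ?_⟩
  rw [add_sub_assoc, ← netInflow, hηφ, netInflow_balancingFlow hℓ0 hnonempty hξ0, add_neg_cancel]

/-- The flow-redistribution lemma (Lemma 4.1): in a symmetric
digraph `D` on `n` vertices in which every ordered pair of distinct vertices is
joined by at least `α n^(ℓ-1)` directed `ℓ`-paths, any zero-sum vertex weighting
`ξ` with values in `[-β, β]` can be balanced by a flow `η` on the arcs with values
in `[0, 2βℓ/(αn)]`. -/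
theorem stmt3 (ℓ : ℕ) (hℓ : 1 ≤ ℓ) (α : ℝ) (hα : 0 < α)
    (V : Type) [Fintype V] [DecidableEq V]
    (A : V → V → Prop) (hsym : ∀ u v, A u v → A v u)
    (hpaths : ∀ s t : V, s ≠ t →
      α * (Fintype.card V : ℝ) ^ (ℓ - 1) ≤
        (Nat.card {f : Fin (ℓ + 1) → V // Function.Injective f ∧ f 0 = s ∧
          f (Fin.last ℓ) = t ∧ ∀ i : Fin ℓ, A (f i.castSucc) (f i.succ)} : ℝ))
    (β : ℝ) (hβ : 0 < β)
    (ξ : V → ℝ) (hξ : ∀ v, ξ v ∈ Set.Icc (-β) β) (hξ0 : ∑ v, ξ v = 0) :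
    ∃ η : V → V → ℝ,
      (∀ u v, A u v → η u v ∈ Set.Icc 0 (2 * β * ℓ / (α * (Fintype.card V : ℝ)))) ∧
      (∀ u v, ¬ A u v → η u v = 0) ∧
      ∀ v, ξ v + (∑ u, η u v) - (∑ u, η v u) = 0 :=
  stmt3_general ℓ hℓ α hα V A hsym hpaths β ξ hξ hξ0
end

section
/- Let $H$ be a $k$-graph and let $T$ be an $(\ell-1,\vec{s},\vec{t})$-transporter in $H$ with underlying edges $s$ and $t$. Then every edge $e\in E(T)\setminus\{s,t\}$ lies in exactly one sending cycle and exactly one receiving cycle of $T$, the edge $s$ lies in exactly $k$ sending cycles and no receiving cycle, and the edge $t$ lies in exactly $k$ receiving cycles and no sending cycle. Consequently, if $\omega'$ is obtained from $\omega\colon\mathcal{C}_{\ell-1}(H)\to\mathbb{R}$ by using $T$ with weight $w$, then for every edge $e$ of $H$, $\sum_{C: e\in E(C)}\omega'(C) = \sum_{C: e\in E(C)}\omega(C) - w\,\mathbf{1}[e=s] + w\,\mathbf{1}[e=t]$. -/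
/-!
Write positions of the walk as `i * ℓ + c` with `c < ℓ` (segment `i`, offset `c`): offsets
`c < k` carry the copy of `s`, offsets in `[ℓ/2, ℓ/2 + k)` the copy of `t`. Sending cycle `i`
consists of the edges at offsets `[0, ℓ/2)` of segment `i` and `(ℓ/2, ℓ)` of segment `i - 1`,
receiving cycle `i` of the edges at offsets `[1, ℓ)` of segment `i`. So every count follows
once an edge at an offset other than `0` and `ℓ/2` is known to occur at one position only.
An edge containing a vertex outside `s ∪ t` is pinned down by that vertex (meeting condition
and self-avoidance) up to a shift by fewer than `k` steps, and such a shift is impossible since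
repeated vertices of the walk are at least `ℓ - 1` steps apart. The other edges lie inside
`s ∪ t`; they exist only if `k = ℓ/2` or `ℓ/2 + k = ℓ`, and consist of an arc of `s` and an
arc of `t`, each of which determines its starting index. The weight identity is a double
count: the change on `e` is `w/k` times the number of receiving minus sending cycles
through `e`.
-/

namespace Stmt13

variable {V : Type} [Fintype V] [DecidableEq V]

/-- The `k`-window (as a vertex set) of the cyclic vertex sequence
`v : ZMod (k·ℓ) → V` starting at position `i`; these windows are the edges of the
closed walk encoded by `v`. -/
def win (k ℓ : ℕ) (v : ZMod (k * ℓ) → V) (i : ℕ) : Finset V :=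
  Finset.univ.image fun j : Fin k => v ((i + j.1 : ℕ) : ZMod (k * ℓ))

/-- Edge set of the `i`-th sending cycle of the transporter encoded by `v`:
the edges `e_{iℓ}, …, e_{iℓ+⌊ℓ/2⌋-1}` together with
`e_{(i-1)ℓ+⌊ℓ/2⌋+1}, …, e_{iℓ-1}` (indices mod `kℓ`, and `i-1` taken mod `k`). -/
def SC (k ℓ : ℕ) (v : ZMod (k * ℓ) → V) (i : ℕ) : Finset (Finset V) :=
  ((Finset.range (ℓ / 2)).image fun a => win k ℓ v (i * ℓ + a)) ∪
  ((Finset.range (ℓ - ℓ / 2 - 1)).image fun a =>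
    win k ℓ v ((i + (k - 1)) * ℓ + ℓ / 2 + 1 + a))

/-- Edge set of the `i`-th receiving cycle of the transporter encoded by `v`:
the edges `e_{iℓ+⌊ℓ/2⌋}, …, e_{(i+1)ℓ-1}` together with
`e_{iℓ+1}, …, e_{iℓ+⌊ℓ/2⌋-1}` (indices mod `kℓ`). -/
def RC (k ℓ : ℕ) (v : ZMod (k * ℓ) → V) (i : ℕ) : Finset (Finset V) :=
  ((Finset.range (ℓ - ℓ / 2)).image fun a => win k ℓ v (i * ℓ + ℓ / 2 + a)) ∪
  ((Finset.range (ℓ / 2 - 1)).image fun a => win k ℓ v (i * ℓ + 1 + a))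

/-- Edge set `E(T)` of the transporter encoded by `v`. -/
def ET (k ℓ : ℕ) (v : ZMod (k * ℓ) → V) : Finset (Finset V) :=
  (Finset.range (k * ℓ)).image fun i => win k ℓ v i

open Finset

lemma not_modEq_add_self {k n d : ℕ} (hd : 0 < d) (hdk : d < k) : ¬ n + d ≡ n [MOD k] :=
  fun h => absurd (Nat.le_of_dvd hd (Nat.add_modEq_left_iff.1 h)) (by omega)

lemma mul_add_modEq_mul_add_iff {k ℓ i i' a b : ℕ} (ha : a < ℓ) (hb : b < ℓ) :
    i * ℓ + a ≡ i' * ℓ + b [MOD k * ℓ] ↔ i ≡ i' [MOD k] ∧ a = b := by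
  constructor
  · intro h
    have hab : a = b := by
      have h' : (i * ℓ + a) % ℓ = (i' * ℓ + b) % ℓ := Nat.ModEq.of_mul_left k h
      rwa [Nat.mul_add_mod_self_right, Nat.mul_add_mod_self_right, Nat.mod_eq_of_lt ha,
        Nat.mod_eq_of_lt hb] at h'
    subst hab
    exact ⟨Nat.ModEq.mul_right_cancel' (by omega) (Nat.ModEq.add_right_cancel' a h), rfl⟩
  · rintro ⟨h, rfl⟩
    exact (h.mul_right' ℓ).add_right a

lemma exists_mul_add {ℓ : ℕ} (hℓ : 0 < ℓ) (x : ℕ) : ∃ i a, a < ℓ ∧ x = i * ℓ + a :=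
  ⟨x / ℓ, x % ℓ, Nat.mod_lt x hℓ, (Nat.div_add_mod' x ℓ).symm⟩

lemma add_sub_one_modEq_iff {k i j : ℕ} (hk : 0 < k) :
    i + (k - 1) ≡ j [MOD k] ↔ i ≡ j + 1 [MOD k] := by
  constructor
  · intro h
    calc i ≡ i + k [MOD k] := Nat.add_modEq_right.symm
      _ = i + (k - 1) + 1 := by omega
      _ ≡ j + 1 [MOD k] := h.add_right 1
  · intro h
    calc i + (k - 1) ≡ j + 1 + (k - 1) [MOD k] := h.add_right _
      _ = j + k := by omega
      _ ≡ j [MOD k] := Nat.add_modEq_right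

lemma exists_lt_add_mod_eq {k : ℕ} (hk : 0 < k) (i : ℕ) {m : ℕ} (hm : m < k) :
    ∃ b < k, (i + b) % k = m := by
  refine ⟨(m + (k - i % k)) % k, Nat.mod_lt _ hk, ?_⟩
  have hi := Nat.div_add_mod i k
  have hik := Nat.mod_lt i hk
  rw [Nat.add_mod_mod, show i + (m + (k - i % k)) = m + k * (i / k + 1) by rw [mul_add]; omega,
    Nat.add_mul_mod_self_left, Nat.mod_eq_of_lt hm]

lemma card_filter_range_modEq {k : ℕ} (hk : 0 < k) (m : ℕ) :
    #{i ∈ range k | i ≡ m [MOD k]} = 1 := by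
  rw [card_eq_one]
  refine ⟨m % k, ext fun i => ?_⟩
  simp only [mem_filter, mem_range, mem_singleton]
  constructor
  · rintro ⟨hi, h⟩
    exact (Nat.mod_eq_of_lt hi).symm.trans h
  · rintro rfl
    exact ⟨Nat.mod_lt _ hk, Nat.mod_mod _ _⟩

section Arc

variable {α : Type*} {k : ℕ}

def periodize (f : Fin k → α) (hk : 0 < k) (n : ℕ) : α := f ⟨n % k, Nat.mod_lt n hk⟩

variable {f g : Fin k → α} {hk : 0 < k}

lemma periodize_congr {a b : ℕ} (h : a ≡ b [MOD k]) : periodize f hk a = periodize f hk b :=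
  congrArg f (Fin.ext h)

lemma periodize_eq_periodize_iff (hf : Function.Injective f) {a b : ℕ} :
    periodize f hk a = periodize f hk b ↔ a ≡ b [MOD k] :=
  ⟨fun h => congrArg Fin.val (hf h), periodize_congr⟩

variable [DecidableEq α]

def arc (f : Fin k → α) (hk : 0 < k) (u L : ℕ) : Finset α :=
  (range L).image fun m => periodize f hk (u + m)

lemma mem_arc {u L : ℕ} {x : α} : x ∈ arc f hk u L ↔ ∃ m < L, periodize f hk (u + m) = x := by
  simp [arc]

lemma arc_subset_image (u L : ℕ) : arc f hk u L ⊆ univ.image f := by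
  intro x hx
  obtain ⟨m, -, rfl⟩ := mem_arc.1 hx
  exact mem_image_of_mem f (mem_univ _)

lemma arc_self (u : ℕ) : arc f hk u k = univ.image f := by
  refine (arc_subset_image u k).antisymm fun x hx => ?_
  obtain ⟨a, -, rfl⟩ := mem_image.1 hx
  obtain ⟨m, hm, hma⟩ := exists_lt_add_mod_eq hk u a.2
  exact mem_arc.2 ⟨m, hm, congrArg f (Fin.ext hma)⟩

lemma card_arc (hf : Function.Injective f) {L : ℕ} (hL : L ≤ k) (u : ℕ) :
    #(arc f hk u L) = L := by
  rw [arc, card_image_of_injOn, card_range]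
  intro m hm m' hm' h
  simp only [coe_range, Set.mem_Iio] at hm hm'
  exact (Nat.ModEq.add_left_cancel' u ((periodize_eq_periodize_iff hf).1 h)).eq_of_lt_of_lt
    (by omega) (by omega)

/-- The start `u` is the only element of the arc whose predecessor `u + (k - 1)` lies outside
it. -/
lemma modEq_of_arc_eq (hf : Function.Injective f) {u u' L L' : ℕ} (hL' : 0 < L') (hL'k : L' < k)
    (h : arc f hk u L = arc f hk u' L') : u ≡ u' [MOD k] := by
  have hu' : periodize f hk (u' + 0) ∈ arc f hk u L := by rw [h]; exact mem_arc.2 ⟨0, hL', rfl⟩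
  obtain ⟨m, hm, hum⟩ := mem_arc.1 hu'
  rw [periodize_eq_periodize_iff hf, add_zero] at hum
  rcases m with _ | m
  · simpa using hum
  have hpred : periodize f hk (u + m) ∈ arc f hk u' L' := by
    rw [← h]; exact mem_arc.2 ⟨m, by omega, rfl⟩
  obtain ⟨m', hm', hm'u⟩ := mem_arc.1 hpred
  rw [periodize_eq_periodize_iff hf] at hm'u
  refine absurd ?_ (not_modEq_add_self (k := k) (n := u') (d := m' + 1) (by omega) (by omega))
  calc u' + (m' + 1) = u' + m' + 1 := by ring
    _ ≡ u + m + 1 [MOD k] := hm'u.add_right 1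
    _ = u + (m + 1) := by ring
    _ ≡ u' [MOD k] := hum

lemma arc_eq_of_union_eq (hfg : Disjoint (univ.image f) (univ.image g)) {u u' L L' w w' M M' : ℕ}
    (h : arc f hk u L ∪ arc g hk w M = arc f hk u' L' ∪ arc g hk w' M') :
    arc f hk u L = arc f hk u' L' ∧ arc g hk w M = arc g hk w' M' := by
  have key : ∀ u L w M, (arc f hk u L ∪ arc g hk w M) ∩ univ.image f = arc f hk u L ∧
      (arc f hk u L ∪ arc g hk w M) ∩ univ.image g = arc g hk w M := fun u L w M => by
    have hf := arc_subset_image (f := f) (hk := hk) u L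
    have hg := arc_subset_image (f := g) (hk := hk) w M
    rw [union_inter_distrib_right, union_inter_distrib_right, inter_eq_left.2 hf,
      inter_eq_left.2 hg, disjoint_iff_inter_eq_empty.1 (hfg.symm.mono_left hg),
      disjoint_iff_inter_eq_empty.1 (hfg.mono_left hf)]
    simp
  obtain ⟨hf, hg⟩ := key u L w M
  obtain ⟨hf', hg'⟩ := key u' L' w' M'
  rw [h] at hf hg
  exact ⟨hf.symm.trans hf', hg.symm.trans hg'⟩

end Arc

section Weights

variable {β : Type*} [Fintype β] [DecidableEq β]

lemma sum_ite_mem_card_filter_eq (F : ℕ → Finset β) (n : ℕ) (e : β) :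
    ∑ C : Finset β, (if e ∈ C then (#{i ∈ range n | F i = C} : ℝ) else 0) =
      #{i ∈ range n | e ∈ F i} := by
  rw [← sum_filter, card_eq_sum_card_fiberwise (f := F) (t := univ.filter (e ∈ ·))
    (fun i hi => by simpa using (mem_filter.1 hi).2), Nat.cast_sum]
  refine sum_congr rfl fun C hC => ?_
  rw [filter_filter]
  congr 2
  exact filter_congr fun i _ => ⟨fun h => ⟨h ▸ (mem_filter.1 hC).2, h⟩, And.right⟩

lemma sum_ite_mem_eq_add {ω ω' : Finset β → ℝ} {c : ℝ} {n : ℕ} {R S : ℕ → Finset β}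
    (h : ∀ C, ω' C = ω C + c * ((#{i ∈ range n | R i = C} : ℝ) - #{i ∈ range n | S i = C}))
    (e : β) :
    ∑ C : Finset β, (if e ∈ C then ω' C else 0) =
      ∑ C : Finset β, (if e ∈ C then ω C else 0) +
        c * ((#{i ∈ range n | e ∈ R i} : ℝ) - #{i ∈ range n | e ∈ S i}) := by
  rw [← sum_ite_mem_card_filter_eq R, ← sum_ite_mem_card_filter_eq S, ← sum_sub_distrib, mul_sum,
    ← sum_add_distrib]
  refine sum_congr rfl fun C _ => ?_
  split_ifs <;> simp [h]

end Weights

lemma v_congr {α : Type*} {k ℓ : ℕ} {v : ZMod (k * ℓ) → α} {x y : ℕ} (h : x ≡ y [MOD k * ℓ]) :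
    v (x : ℕ) = v (y : ℕ) :=
  congrArg v ((ZMod.natCast_eq_natCast_iff _ _ _).2 h)

lemma v_mul_add_mod {α : Type*} {k ℓ : ℕ} (v : ZMod (k * ℓ) → α) (i a : ℕ) :
    v (i * ℓ + a : ℕ) = v (i % k * ℓ + a : ℕ) :=
  v_congr (((Nat.mod_modEq i k).symm.mul_right' ℓ).add_right a)

section Transporter

omit [Fintype V]

variable {k ℓ : ℕ} {s t : Fin k → V} {v : ZMod (k * ℓ) → V}

lemma win_congr {p q : ℕ} (h : p ≡ q [MOD k * ℓ]) : win k ℓ v p = win k ℓ v q := by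
  simp only [win]
  exact image_congr fun j _ => v_congr (h.add_right j.1)

lemma mem_win {p : ℕ} {x : V} : x ∈ win k ℓ v p ↔ ∃ j < k, v (p + j : ℕ) = x := by
  simp [win, Fin.exists_iff]

def vertices (v : ZMod (k * ℓ) → V) (p L : ℕ) : Finset V := (range L).image fun j => v (p + j : ℕ)

lemma win_eq_vertices (p : ℕ) : win k ℓ v p = vertices v p k := by
  ext x
  simp [mem_win, vertices]

lemma vertices_add (p L M : ℕ) :
    vertices v p (L + M) = vertices v p L ∪ vertices v (p + L) M := by
  simp only [vertices, range_add, image_union, map_eq_image, image_image]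
  congr 1
  refine image_congr fun j _ => ?_
  simp [add_assoc]

lemma win_mem_ET (hN : 0 < k * ℓ) (p : ℕ) : win k ℓ v p ∈ ET k ℓ v :=
  mem_image.2 ⟨p % (k * ℓ), mem_range.2 (Nat.mod_lt _ hN), win_congr (Nat.mod_modEq _ _)⟩

lemma SC_subset_ET (hN : 0 < k * ℓ) (i : ℕ) : SC k ℓ v i ⊆ ET k ℓ v :=
  union_subset (image_subset_iff.2 fun _ _ => win_mem_ET hN _)
    (image_subset_iff.2 fun _ _ => win_mem_ET hN _)

lemma RC_subset_ET (hN : 0 < k * ℓ) (i : ℕ) : RC k ℓ v i ⊆ ET k ℓ v :=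
  union_subset (image_subset_iff.2 fun _ _ => win_mem_ET hN _)
    (image_subset_iff.2 fun _ _ => win_mem_ET hN _)

lemma mem_SC_iff {i : ℕ} {e : Finset V} :
    e ∈ SC k ℓ v i ↔ (∃ a < ℓ / 2, win k ℓ v (i * ℓ + a) = e) ∨
      ∃ a, ℓ / 2 < a ∧ a < ℓ ∧ win k ℓ v ((i + (k - 1)) * ℓ + a) = e := by
  simp only [SC, mem_union, mem_image, mem_range]
  constructor
  · rintro (h | ⟨α, hα, rfl⟩)
    · exact Or.inl h
    · exact Or.inr ⟨ℓ / 2 + 1 + α, by omega, by omega, by rw [add_assoc, add_assoc, add_assoc]⟩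
  · rintro (h | ⟨a, ha, haℓ, rfl⟩)
    · exact Or.inl h
    · refine Or.inr ⟨a - (ℓ / 2 + 1), by omega, ?_⟩
      rw [add_assoc _ (ℓ / 2), add_assoc, Nat.add_sub_cancel' ha]

lemma mem_RC_iff (hℓ : 2 ≤ ℓ) {i : ℕ} {e : Finset V} :
    e ∈ RC k ℓ v i ↔ ∃ a, 0 < a ∧ a < ℓ ∧ win k ℓ v (i * ℓ + a) = e := by
  simp only [RC, mem_union, mem_image, mem_range]
  constructor
  · rintro (⟨α, hα, rfl⟩ | ⟨α, hα, rfl⟩)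
    · exact ⟨ℓ / 2 + α, by omega, by omega, by rw [add_assoc]⟩
    · exact ⟨1 + α, by omega, by omega, by rw [add_assoc]⟩
  · rintro ⟨a, ha0, haℓ, rfl⟩
    rcases le_or_gt (ℓ / 2) a with h | h
    · exact Or.inl ⟨a - ℓ / 2, by omega, by rw [add_assoc, Nat.add_sub_cancel' h]⟩
    · exact Or.inr ⟨a - 1, by omega, by rw [add_assoc, Nat.add_sub_cancel' (by omega)]⟩

/-- The conditions of an `(ℓ-1, s⃗, t⃗)`-transporter on the closed walk whose `p`-th edge is
`win k ℓ v p`; its `i`-th segment occupies the positions `iℓ, …, iℓ + ℓ - 1`. -/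
structure IsTransporter (k ℓ : ℕ) (s t : Fin k → V) (v : ZMod (k * ℓ) → V) : Prop where
  two_le : 2 ≤ k
  injective_s : Function.Injective s
  injective_t : Function.Injective t
  disjoint_st : Disjoint (univ.image s) (univ.image t)
  visits_s : ∀ i < k, ∀ j : Fin k,
    v ((i * ℓ + j.1 : ℕ) : ZMod (k * ℓ)) =
      s ⟨(i + j.1) % k, Nat.mod_lt _ (Nat.zero_lt_of_lt two_le)⟩
  visits_t : ∀ i < k, ∀ j : Fin k,
    v ((i * ℓ + ℓ / 2 + j.1 : ℕ) : ZMod (k * ℓ)) =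
      t ⟨(i + j.1) % k, Nat.mod_lt _ (Nat.zero_lt_of_lt two_le)⟩
  self_avoiding : ∀ i < k, ∀ a < ℓ, ∀ b < ℓ, a ≠ b →
    v ((i * ℓ + a : ℕ) : ZMod (k * ℓ)) ≠ v ((i * ℓ + b : ℕ) : ZMod (k * ℓ))
  meet : ∀ i < k, ∀ i' < k, i ≠ i' → ∀ a < ℓ, ∀ b < ℓ,
    v ((i * ℓ + a : ℕ) : ZMod (k * ℓ)) = v ((i' * ℓ + b : ℕ) : ZMod (k * ℓ)) →
    v ((i * ℓ + a : ℕ) : ZMod (k * ℓ)) ∈ univ.image s ∪ univ.image t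

namespace IsTransporter

variable (hT : IsTransporter k ℓ s t v)
include hT

lemma k_pos : 0 < k := by have := hT.two_le; omega

lemma s_ne_t (a b : Fin k) : s a ≠ t b := fun h =>
  disjoint_left.1 hT.disjoint_st (mem_image_of_mem s (mem_univ a))
    (h ▸ mem_image_of_mem t (mem_univ b))

lemma image_s_ne_image_t : univ.image s ≠ univ.image t := fun h => by
  obtain ⟨b, -, hb⟩ := mem_image.1 (h ▸ mem_image_of_mem s (mem_univ (⟨0, hT.k_pos⟩ : Fin k)))
  exact hT.s_ne_t _ b hb.symm

lemma k_le_half : k ≤ ℓ / 2 := by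
  by_contra! h
  have hs := hT.visits_s 0 hT.k_pos ⟨ℓ / 2, h⟩
  have ht := hT.visits_t 0 hT.k_pos ⟨0, hT.k_pos⟩
  rw [add_zero] at ht
  exact hT.s_ne_t _ _ (hs.symm.trans ht)

lemma half_add_k_le : ℓ / 2 + k ≤ ℓ := by
  by_contra! h
  have hs := hT.visits_s 1 hT.two_le ⟨0, hT.k_pos⟩
  have ht := hT.visits_t 0 hT.k_pos ⟨ℓ - ℓ / 2, by omega⟩
  rw [show 0 * ℓ + ℓ / 2 + (ℓ - ℓ / 2) = 1 * ℓ + 0 by omega] at ht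
  exact hT.s_ne_t _ _ (hs.symm.trans ht)

lemma ℓ_pos : 0 < ℓ := by have := hT.two_le; have := hT.k_le_half; omega

lemma v_mul_add_of_lt (i : ℕ) {c : ℕ} (hc : c < k) :
    v (i * ℓ + c : ℕ) = periodize s hT.k_pos (i + c) := by
  rw [v_mul_add_mod v, hT.visits_s _ (Nat.mod_lt i hT.k_pos) ⟨c, hc⟩]
  exact congrArg s (Fin.ext (Nat.mod_add_mod i k c))

lemma v_mul_add_half_add_of_lt (i : ℕ) {c : ℕ} (hc : c < k) :
    v (i * ℓ + ℓ / 2 + c : ℕ) = periodize t hT.k_pos (i + c) := by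
  rw [add_assoc, v_mul_add_mod v, ← add_assoc, hT.visits_t _ (Nat.mod_lt i hT.k_pos) ⟨c, hc⟩]
  exact congrArg t (Fin.ext (Nat.mod_add_mod i k c))

lemma eq_of_v_mul_add_eq (i : ℕ) {a b : ℕ} (ha : a < ℓ) (hb : b < ℓ)
    (h : v (i * ℓ + a : ℕ) = v (i * ℓ + b : ℕ)) : a = b := by
  rw [v_mul_add_mod v, v_mul_add_mod v i b] at h
  by_contra hab
  exact hT.self_avoiding _ (Nat.mod_lt i hT.k_pos) a ha b hb hab h

lemma mem_of_v_mul_add_eq {i i' a b : ℕ} (ha : a < ℓ) (hb : b < ℓ) (hi : ¬i ≡ i' [MOD k])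
    (h : v (i * ℓ + a : ℕ) = v (i' * ℓ + b : ℕ)) :
    v (i * ℓ + a : ℕ) ∈ univ.image s ∪ univ.image t := by
  rw [v_mul_add_mod v, v_mul_add_mod v i' b] at h
  rw [v_mul_add_mod v]
  exact hT.meet _ (Nat.mod_lt i hT.k_pos) _ (Nat.mod_lt i' hT.k_pos) hi a ha b hb h

lemma lt_of_v_mem_s (i : ℕ) {a : ℕ} (ha : a < ℓ) (h : v (i * ℓ + a : ℕ) ∈ univ.image s) :
    a < k := by
  obtain ⟨m, -, hm⟩ := mem_image.1 h
  obtain ⟨b, hb, hbm⟩ := exists_lt_add_mod_eq hT.k_pos i m.2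
  have hvb : v (i * ℓ + b : ℕ) = s m :=
    (hT.v_mul_add_of_lt i hb).trans (congrArg s (Fin.ext hbm))
  have := hT.k_le_half
  rw [hT.eq_of_v_mul_add_eq i ha (by omega) (hm.symm.trans hvb.symm)]
  exact hb

lemma half_le_of_v_mem_t (i : ℕ) {a : ℕ} (ha : a < ℓ) (h : v (i * ℓ + a : ℕ) ∈ univ.image t) :
    ℓ / 2 ≤ a ∧ a < ℓ / 2 + k := by
  obtain ⟨m, -, hm⟩ := mem_image.1 h
  obtain ⟨b, hb, hbm⟩ := exists_lt_add_mod_eq hT.k_pos i m.2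
  have hvb : v (i * ℓ + (ℓ / 2 + b) : ℕ) = t m := by
    rw [← add_assoc]
    exact (hT.v_mul_add_half_add_of_lt i hb).trans (congrArg t (Fin.ext hbm))
  have := hT.half_add_k_le
  have := hT.eq_of_v_mul_add_eq i ha (by omega) (hm.symm.trans hvb.symm)
  omega

lemma v_not_mem_of_interior (i : ℕ) {a : ℕ} (ha : a < ℓ) (hka : k ≤ a)
    (hmid : a < ℓ / 2 ∨ ℓ / 2 + k ≤ a) : v (i * ℓ + a : ℕ) ∉ univ.image s ∪ univ.image t := by
  rw [mem_union, not_or]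
  exact ⟨fun h => absurd (hT.lt_of_v_mem_s i ha h) (by omega),
    fun h => absurd (hT.half_le_of_v_mem_t i ha h) (by omega)⟩

/-- A vertex outside `s ∪ t` lies on a single segment, where it occurs once. -/
lemma modEq_of_v_eq {x y : ℕ} (hx : v (x : ℕ) ∉ univ.image s ∪ univ.image t)
    (h : v (x : ℕ) = v (y : ℕ)) : x ≡ y [MOD k * ℓ] := by
  obtain ⟨i, a, ha, rfl⟩ := exists_mul_add hT.ℓ_pos x
  obtain ⟨i', b, hb, rfl⟩ := exists_mul_add hT.ℓ_pos y
  have hi : i ≡ i' [MOD k] := by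
    by_contra hi
    exact hx (hT.mem_of_v_mul_add_eq ha hb hi h)
  rw [v_congr (v := v) ((hi.symm.mul_right' ℓ).add_right b)] at h
  exact (mul_add_modEq_mul_add_iff ha hb).2 ⟨hi, hT.eq_of_v_mul_add_eq i ha hb h⟩

/-- Within a segment by self-avoidance; across segments because the copies of `s` and of `t`
advance by `ℓ - 1` positions from one segment to the next. -/
lemma v_ne_v_add (x : ℕ) {δ : ℕ} (hδ : 0 < δ) (hδℓ : δ + 1 < ℓ) : v (x : ℕ) ≠ v (x + δ : ℕ) := by
  have := hT.two_le
  have := hT.k_le_half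
  have := hT.half_add_k_le
  obtain ⟨i, a, ha, rfl⟩ := exists_mul_add hT.ℓ_pos x
  intro h
  by_cases haδ : a + δ < ℓ
  · rw [add_assoc] at h
    exact absurd (hT.eq_of_v_mul_add_eq i ha haδ h) (by omega)
  rw [show i * ℓ + a + δ = (i + 1) * ℓ + (a + δ - ℓ) by rw [add_one_mul]; omega] at h
  have hi : ¬i ≡ i + 1 [MOD k] := fun h' => not_modEq_add_self one_pos hT.two_le h'.symm
  rcases mem_union.1 (hT.mem_of_v_mul_add_eq ha (by omega) hi h) with hs | ht
  · have ha' := hT.lt_of_v_mem_s i ha hs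
    have hb' := hT.lt_of_v_mem_s (i + 1) (a := a + δ - ℓ) (by omega) (h ▸ hs)
    rw [hT.v_mul_add_of_lt i ha', hT.v_mul_add_of_lt (i + 1) hb',
      periodize_eq_periodize_iff hT.injective_s,
      show i + a = i + 1 + (a + δ - ℓ) + (ℓ - 1 - δ) by omega] at h
    exact not_modEq_add_self (by omega) (by omega) h
  · have ha' := hT.half_le_of_v_mem_t i ha ht
    have hb' := hT.half_le_of_v_mem_t (i + 1) (a := a + δ - ℓ) (by omega) (h ▸ ht)
    rw [show i * ℓ + a = i * ℓ + ℓ / 2 + (a - ℓ / 2) by omega,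
      show (i + 1) * ℓ + (a + δ - ℓ) = (i + 1) * ℓ + ℓ / 2 + (a + δ - ℓ - ℓ / 2) by omega,
      hT.v_mul_add_half_add_of_lt i (by omega), hT.v_mul_add_half_add_of_lt (i + 1) (by omega),
      periodize_eq_periodize_iff hT.injective_t,
      show i + (a - ℓ / 2) = i + 1 + (a + δ - ℓ - ℓ / 2) + (ℓ - 1 - δ) by omega] at h
    exact not_modEq_add_self (by omega) (by omega) h

lemma win_ne_win_add (p : ℕ) {d : ℕ} (hd : 0 < d) (hdk : d < k) :
    win k ℓ v p ≠ win k ℓ v (p + d) := by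
  intro h
  have hp : v (p + 0 : ℕ) ∈ win k ℓ v (p + d) := h ▸ mem_win.2 ⟨0, hT.k_pos, rfl⟩
  obtain ⟨j, hj, hpj⟩ := mem_win.1 hp
  rw [add_zero, add_assoc] at hpj
  have := hT.k_le_half
  exact hT.v_ne_v_add p (δ := d + j) (by omega) (by omega) hpj.symm

/-- The vertex outside `s ∪ t` pins the position down up to a shift by less than `k`, and
shifted windows differ. -/
lemma modEq_of_win_eq_of_v_not_mem {p q j : ℕ} (hj : j < k)
    (hx : v (p + j : ℕ) ∉ univ.image s ∪ univ.image t) (h : win k ℓ v p = win k ℓ v q) :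
    p ≡ q [MOD k * ℓ] := by
  have hq : v (p + j : ℕ) ∈ win k ℓ v q := h ▸ mem_win.2 ⟨j, hj, rfl⟩
  obtain ⟨j', hj', hpq⟩ := mem_win.1 hq
  have hpq := hT.modEq_of_v_eq hx hpq.symm
  rcases lt_trichotomy j j' with hlt | rfl | hgt
  · rw [show q + j' = q + (j' - j) + j by omega] at hpq
    have hshift := win_congr (v := v) (Nat.ModEq.add_right_cancel' j hpq)
    exact absurd (h.symm.trans hshift) (hT.win_ne_win_add q (by omega) (by omega))
  · exact Nat.ModEq.add_right_cancel' j hpq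
  · rw [show p + j = p + (j - j') + j' by omega] at hpq
    have hshift := win_congr (v := v) (Nat.ModEq.add_right_cancel' j' hpq)
    exact absurd (h.trans hshift.symm) (hT.win_ne_win_add p (by omega) (by omega))

lemma vertices_mul_add_eq_arc_s (i : ℕ) {c L : ℕ} (h : c + L ≤ k) :
    vertices v (i * ℓ + c) L = arc s hT.k_pos (i + c) L :=
  image_congr fun m hm => by
    simp only [coe_range, Set.mem_Iio] at hm
    rw [add_assoc, hT.v_mul_add_of_lt i (by omega), add_assoc]

lemma vertices_mul_add_half_add_eq_arc_t (i : ℕ) {c L : ℕ} (h : c + L ≤ k) :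
    vertices v (i * ℓ + ℓ / 2 + c) L = arc t hT.k_pos (i + c) L :=
  image_congr fun m hm => by
    simp only [coe_range, Set.mem_Iio] at hm
    rw [add_assoc _ c, hT.v_mul_add_half_add_of_lt i (by omega), add_assoc]

lemma win_mul (i : ℕ) : win k ℓ v (i * ℓ) = univ.image s := by
  rw [win_eq_vertices, ← add_zero (i * ℓ), hT.vertices_mul_add_eq_arc_s i (by rw [zero_add]),
    arc_self]

lemma win_mul_add_half (i : ℕ) : win k ℓ v (i * ℓ + ℓ / 2) = univ.image t := by
  rw [win_eq_vertices, ← add_zero (i * ℓ + ℓ / 2),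
    hT.vertices_mul_add_half_add_eq_arc_t i (by rw [zero_add]), arc_self]

lemma win_mul_add_of_k_eq_half (hk : k = ℓ / 2) (i : ℕ) {c : ℕ} (hc : c ≤ k) :
    win k ℓ v (i * ℓ + c) = arc s hT.k_pos (i + c) (k - c) ∪ arc t hT.k_pos i c := by
  have hsplit := vertices_add (v := v) (i * ℓ + c) (k - c) c
  rw [Nat.sub_add_cancel hc] at hsplit
  rw [win_eq_vertices, hsplit, hT.vertices_mul_add_eq_arc_s i (by omega),
    show i * ℓ + c + (k - c) = i * ℓ + ℓ / 2 + 0 by omega,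
    hT.vertices_mul_add_half_add_eq_arc_t i (by omega), add_zero]

lemma win_mul_add_half_add_of_half_add_eq (hk : ℓ / 2 + k = ℓ) (i : ℕ) {e : ℕ} (he : e ≤ k) :
    win k ℓ v (i * ℓ + ℓ / 2 + e) = arc t hT.k_pos (i + e) (k - e) ∪ arc s hT.k_pos (i + 1) e := by
  have hsplit := vertices_add (v := v) (i * ℓ + ℓ / 2 + e) (k - e) e
  rw [Nat.sub_add_cancel he] at hsplit
  rw [win_eq_vertices, hsplit, hT.vertices_mul_add_half_add_eq_arc_t i (by omega),
    show i * ℓ + ℓ / 2 + e + (k - e) = (i + 1) * ℓ + 0 by rw [add_one_mul]; omega,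
    hT.vertices_mul_add_eq_arc_s (i + 1) (by omega), add_zero]

lemma eq_zero_of_win_eq (i : ℕ) {c : ℕ} (hc : c < ℓ) (h : win k ℓ v (i * ℓ + c) = univ.image s) :
    c = 0 := by
  have hmem : ∀ j < k, c + j < ℓ → c + j < k := fun j hj hcj =>
    hT.lt_of_v_mem_s i hcj (by rw [← add_assoc, ← h]; exact mem_win.2 ⟨j, hj, rfl⟩)
  have := hmem 0 hT.k_pos (by omega)
  have := hT.k_le_half
  by_contra hc0
  have := hmem (k - c) (by omega) (by omega)
  omega

lemma eq_half_of_win_eq (i : ℕ) {c : ℕ} (hc : c < ℓ) (h : win k ℓ v (i * ℓ + c) = univ.image t) :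
    c = ℓ / 2 := by
  have hmem : ∀ j < k, v (i * ℓ + c + j : ℕ) ∈ univ.image t := fun j hj =>
    h ▸ mem_win.2 ⟨j, hj, rfl⟩
  have hc0 := hmem 0 hT.k_pos
  rw [add_zero] at hc0
  have := hT.half_le_of_v_mem_t i hc hc0
  have := hT.two_le
  have := hT.k_le_half
  by_contra hch
  have hend := hmem (ℓ / 2 + k - c) (by omega)
  rw [show i * ℓ + c + (ℓ / 2 + k - c) = i * ℓ + (ℓ / 2 + k) by omega] at hend
  rcases hT.half_add_k_le.lt_or_eq with hlt | heq
  · have := hT.half_le_of_v_mem_t i hlt hend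
    omega
  · rw [heq, show i * ℓ + ℓ = (i + 1) * ℓ + 0 by rw [add_one_mul, add_zero]] at hend
    have := hT.half_le_of_v_mem_t (i + 1) hT.ℓ_pos hend
    omega

lemma exists_v_not_mem_or (i : ℕ) {c : ℕ} (hc : c < ℓ) (hc0 : c ≠ 0) (hch : c ≠ ℓ / 2) :
    (∃ j < k, v (i * ℓ + c + j : ℕ) ∉ univ.image s ∪ univ.image t) ∨
      (k = ℓ / 2 ∧ c < k) ∨ (ℓ / 2 + k = ℓ ∧ ℓ / 2 < c) := by
  have := hT.k_pos
  have := hT.k_le_half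
  have := hT.half_add_k_le
  have interior : ∀ a, c ≤ a → a < c + k → a < ℓ → k ≤ a → (a < ℓ / 2 ∨ ℓ / 2 + k ≤ a) →
      ∃ j < k, v (i * ℓ + c + j : ℕ) ∉ univ.image s ∪ univ.image t :=
    fun a hca hac haℓ hka hmid => ⟨a - c, by omega, by
      rw [add_assoc, Nat.add_sub_cancel' hca]; exact hT.v_not_mem_of_interior i haℓ hka hmid⟩
  rcases lt_or_ge c k with hck | hck
  · rcases lt_or_ge k (ℓ / 2) with hkl | hkl
    · exact Or.inl (interior k (by omega) (by omega) (by omega) le_rfl (Or.inl hkl))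
    · exact Or.inr (Or.inl ⟨by omega, hck⟩)
  rcases lt_or_ge c (ℓ / 2) with hcl | hcl
  · exact Or.inl (interior c le_rfl (by omega) hc hck (Or.inl hcl))
  rcases lt_or_ge c (ℓ / 2 + k) with hcm | hcm
  · rcases lt_or_ge (ℓ / 2 + k) ℓ with hm | hm
    · exact Or.inl (interior (ℓ / 2 + k) (by omega) (by omega) hm (by omega) (Or.inr le_rfl))
    · exact Or.inr (Or.inr ⟨by omega, by omega⟩)
  · exact Or.inl (interior c le_rfl (by omega) hc hck (Or.inr hcm))

lemma modEq_of_win_eq_of_k_eq_half (hk : k = ℓ / 2) {i i' c c' : ℕ} (hc0 : 0 < c) (hc : c < k)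
    (hc0' : 0 < c') (hc' : c' < k) (h : win k ℓ v (i * ℓ + c) = win k ℓ v (i' * ℓ + c')) :
    i ≡ i' [MOD k] ∧ c = c' := by
  rw [hT.win_mul_add_of_k_eq_half hk i hc.le, hT.win_mul_add_of_k_eq_half hk i' hc'.le] at h
  have hs := (arc_eq_of_union_eq hT.disjoint_st h).1
  have hlen := congrArg card hs
  rw [card_arc hT.injective_s (by omega), card_arc hT.injective_s (by omega)] at hlen
  obtain rfl : c = c' := by omega
  exact ⟨Nat.ModEq.add_right_cancel' c (modEq_of_arc_eq hT.injective_s (by omega) (by omega) hs),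
    rfl⟩

lemma modEq_of_win_eq_of_half_add_eq (hk : ℓ / 2 + k = ℓ) {i i' e e' : ℕ} (he0 : 0 < e)
    (he : e < k) (he0' : 0 < e') (he' : e' < k)
    (h : win k ℓ v (i * ℓ + ℓ / 2 + e) = win k ℓ v (i' * ℓ + ℓ / 2 + e')) :
    i ≡ i' [MOD k] ∧ e = e' := by
  rw [hT.win_mul_add_half_add_of_half_add_eq hk i he.le,
    hT.win_mul_add_half_add_of_half_add_eq hk i' he'.le] at h
  have hs := (arc_eq_of_union_eq hT.disjoint_st.symm h).2
  have hlen := congrArg card hs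
  rw [card_arc hT.injective_s he.le, card_arc hT.injective_s he'.le] at hlen
  subst hlen
  exact ⟨Nat.ModEq.add_right_cancel' 1 (modEq_of_arc_eq hT.injective_s he0 he hs), rfl⟩

/-- When `ℓ = 2k`, the two kinds of windows inside `s ∪ t` are told apart by where their
`s`-arc starts relative to their `t`-arc. -/
lemma win_ne_win_of_k_eq_half_of_half_add_eq (hk : k = ℓ / 2) (hk' : ℓ / 2 + k = ℓ)
    {i i' c e : ℕ} (hc0 : 0 < c) (hc : c < k) (he0 : 0 < e) (he : e < k) :
    win k ℓ v (i * ℓ + c) ≠ win k ℓ v (i' * ℓ + ℓ / 2 + e) := by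
  intro h
  rw [hT.win_mul_add_of_k_eq_half hk i hc.le, hT.win_mul_add_half_add_of_half_add_eq hk' i' he.le,
    union_comm (arc t hT.k_pos (i' + e) (k - e))] at h
  obtain ⟨hs, ht⟩ := arc_eq_of_union_eq hT.disjoint_st h
  have hlen := congrArg card hs
  rw [card_arc hT.injective_s (by omega), card_arc hT.injective_s he.le] at hlen
  have hsi := modEq_of_arc_eq hT.injective_s he0 he hs
  have hti := modEq_of_arc_eq hT.injective_t (by omega) (by omega) ht
  refine not_modEq_add_self (n := i') one_pos hT.two_le ?_
  calc i' + 1 ≡ i + c [MOD k] := hsi.symm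
    _ ≡ i' + e + c [MOD k] := hti.add_right c
    _ = i' + k := by omega
    _ ≡ i' [MOD k] := Nat.add_modEq_right

theorem modEq_and_eq_of_win_eq {i i' c c' : ℕ} (hc : c < ℓ) (hc0 : c ≠ 0) (hch : c ≠ ℓ / 2)
    (hc' : c' < ℓ) (h : win k ℓ v (i * ℓ + c) = win k ℓ v (i' * ℓ + c')) :
    i ≡ i' [MOD k] ∧ c = c' := by
  have hc'0 : c' ≠ 0 := by
    rintro rfl
    exact hc0 (hT.eq_zero_of_win_eq i hc (h.trans (by rw [add_zero]; exact hT.win_mul i')))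
  have hc'h : c' ≠ ℓ / 2 := by
    rintro rfl
    exact hch (hT.eq_half_of_win_eq i hc (h.trans (hT.win_mul_add_half i')))
  rcases hT.exists_v_not_mem_or i hc hc0 hch with ⟨j, hj, hx⟩ | hd
  · exact (mul_add_modEq_mul_add_iff hc hc').1 (hT.modEq_of_win_eq_of_v_not_mem hj hx h)
  rcases hT.exists_v_not_mem_or i' hc' hc'0 hc'h with ⟨j, hj, hx⟩ | hd'
  · exact (mul_add_modEq_mul_add_iff hc hc').1 (hT.modEq_of_win_eq_of_v_not_mem hj hx h.symm).symm
  have := hT.k_le_half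
  rcases hd with ⟨hk, hck⟩ | ⟨hk, hlc⟩ <;> rcases hd' with ⟨hk', hck'⟩ | ⟨hk', hlc'⟩
  · exact hT.modEq_of_win_eq_of_k_eq_half hk (by omega) hck (by omega) hck' h
  · obtain ⟨e', rfl⟩ : ∃ e', c' = ℓ / 2 + e' := ⟨c' - ℓ / 2, by omega⟩
    rw [← add_assoc] at h
    exact (hT.win_ne_win_of_k_eq_half_of_half_add_eq hk hk' (by omega) hck (by omega) (by omega)
      h).elim
  · obtain ⟨e, rfl⟩ : ∃ e, c = ℓ / 2 + e := ⟨c - ℓ / 2, by omega⟩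
    rw [← add_assoc] at h
    exact (hT.win_ne_win_of_k_eq_half_of_half_add_eq hk' hk (by omega) hck' (by omega) (by omega)
      h.symm).elim
  · obtain ⟨e, rfl⟩ : ∃ e, c = ℓ / 2 + e := ⟨c - ℓ / 2, by omega⟩
    obtain ⟨e', rfl⟩ : ∃ e', c' = ℓ / 2 + e' := ⟨c' - ℓ / 2, by omega⟩
    rw [← add_assoc, ← add_assoc] at h
    obtain ⟨hi, rfl⟩ :=
      hT.modEq_of_win_eq_of_half_add_eq hk (by omega) (by omega) (by omega) (by omega) h
    exact ⟨hi, rfl⟩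

lemma win_mem_RC_iff {i₀ c : ℕ} (hc : c < ℓ) (hc0 : c ≠ 0) (hch : c ≠ ℓ / 2) (i : ℕ) :
    win k ℓ v (i₀ * ℓ + c) ∈ RC k ℓ v i ↔ i ≡ i₀ [MOD k] := by
  have := hT.two_le
  have := hT.k_le_half
  rw [mem_RC_iff (by omega)]
  constructor
  · rintro ⟨a, -, ha, h⟩
    exact (hT.modEq_and_eq_of_win_eq hc hc0 hch ha h.symm).1.symm
  · exact fun h => ⟨c, by omega, hc, win_congr ((h.mul_right' ℓ).add_right c)⟩

lemma win_mem_SC_iff {i₀ c : ℕ} (hc : c < ℓ) (hc0 : c ≠ 0) (hch : c ≠ ℓ / 2) (i : ℕ) :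
    win k ℓ v (i₀ * ℓ + c) ∈ SC k ℓ v i ↔
      i ≡ (if c < ℓ / 2 then i₀ else i₀ + 1) [MOD k] := by
  rw [mem_SC_iff]
  split_ifs with hcl
  · constructor
    · rintro (⟨a, ha, h⟩ | ⟨a, ha, haℓ, h⟩)
      · exact (hT.modEq_and_eq_of_win_eq hc hc0 hch (by omega) h.symm).1.symm
      · exact absurd (hT.modEq_and_eq_of_win_eq hc hc0 hch haℓ h.symm).2 (by omega)
    · exact fun h => Or.inl ⟨c, hcl, win_congr ((h.mul_right' ℓ).add_right c)⟩
  · rw [← add_sub_one_modEq_iff hT.k_pos]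
    constructor
    · rintro (⟨a, ha, h⟩ | ⟨a, ha, haℓ, h⟩)
      · exact absurd (hT.modEq_and_eq_of_win_eq hc hc0 hch (by omega) h.symm).2 (by omega)
      · exact (hT.modEq_and_eq_of_win_eq hc hc0 hch haℓ h.symm).1.symm
    · exact fun h => Or.inr ⟨c, by omega, hc, win_congr ((h.mul_right' ℓ).add_right c)⟩

lemma card_SC_eq_one_and_card_RC_eq_one {e : Finset V} (he : e ∈ ET k ℓ v)
    (hs : e ≠ univ.image s) (ht : e ≠ univ.image t) :
    #{i ∈ range k | e ∈ SC k ℓ v i} = 1 ∧ #{i ∈ range k | e ∈ RC k ℓ v i} = 1 := by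
  obtain ⟨p, -, rfl⟩ := mem_image.1 he
  obtain ⟨i₀, c, hc, rfl⟩ := exists_mul_add hT.ℓ_pos p
  have hc0 : c ≠ 0 := by
    rintro rfl
    exact hs (by rw [add_zero]; exact hT.win_mul i₀)
  have hch : c ≠ ℓ / 2 := by
    rintro rfl
    exact ht (hT.win_mul_add_half i₀)
  rw [filter_congr fun i _ => hT.win_mem_SC_iff hc hc0 hch i,
    filter_congr fun i _ => hT.win_mem_RC_iff hc hc0 hch i]
  exact ⟨card_filter_range_modEq hT.k_pos _, card_filter_range_modEq hT.k_pos _⟩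

lemma card_image_s_mem_SC : #{i ∈ range k | univ.image s ∈ SC k ℓ v i} = k := by
  have := hT.k_pos
  have := hT.k_le_half
  rw [filter_true_of_mem fun i _ =>
    mem_SC_iff.2 (Or.inl ⟨0, by omega, by rw [add_zero]; exact hT.win_mul i⟩), card_range]

lemma card_image_s_mem_RC : #{i ∈ range k | univ.image s ∈ RC k ℓ v i} = 0 := by
  have := hT.two_le
  have := hT.k_le_half
  rw [card_eq_zero, filter_eq_empty_iff]
  intro i _ hi
  obtain ⟨a, ha0, ha, h⟩ := (mem_RC_iff (by omega)).1 hi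
  exact ha0.ne' (hT.eq_zero_of_win_eq i ha h)

lemma card_image_t_mem_RC : #{i ∈ range k | univ.image t ∈ RC k ℓ v i} = k := by
  have := hT.two_le
  have := hT.k_le_half
  rw [filter_true_of_mem fun i _ =>
    (mem_RC_iff (by omega)).2 ⟨ℓ / 2, by omega, by omega, hT.win_mul_add_half i⟩, card_range]

lemma card_image_t_mem_SC : #{i ∈ range k | univ.image t ∈ SC k ℓ v i} = 0 := by
  rw [card_eq_zero, filter_eq_empty_iff]
  intro i _ hi
  rcases mem_SC_iff.1 hi with ⟨a, ha, h⟩ | ⟨a, ha, haℓ, h⟩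
  · exact ha.ne (hT.eq_half_of_win_eq i (by omega) h)
  · exact ha.ne' (hT.eq_half_of_win_eq _ haℓ h)

lemma card_RC_sub_card_SC (e : Finset V) :
    (#{i ∈ range k | e ∈ RC k ℓ v i} : ℝ) - #{i ∈ range k | e ∈ SC k ℓ v i} =
      (if e = univ.image t then (k : ℝ) else 0) - if e = univ.image s then (k : ℝ) else 0 := by
  by_cases hs : e = univ.image s
  · subst hs
    rw [hT.card_image_s_mem_RC, hT.card_image_s_mem_SC, if_neg hT.image_s_ne_image_t, if_pos rfl]
    simp
  by_cases ht : e = univ.image t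
  · subst ht
    rw [hT.card_image_t_mem_RC, hT.card_image_t_mem_SC, if_pos rfl, if_neg hs]
    simp
  rw [if_neg ht, if_neg hs]
  by_cases he : e ∈ ET k ℓ v
  · obtain ⟨hSC, hRC⟩ := hT.card_SC_eq_one_and_card_RC_eq_one he hs ht
    rw [hSC, hRC]
    simp
  · have hN : 0 < k * ℓ := Nat.mul_pos hT.k_pos hT.ℓ_pos
    rw [filter_false_of_mem fun i _ hi => he (RC_subset_ET hN i hi),
      filter_false_of_mem fun i _ hi => he (SC_subset_ET hN i hi)]
    simp

end IsTransporter

end Transporter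

/-- Let `T` be an `(ℓ-1, s⃗, t⃗)`-transporter in a `k`-graph `H`
(encoded by its cyclic vertex sequence `v : ZMod (k·ℓ) → V` satisfying the
visiting, self-avoidance and meeting conditions). Then every edge
`e ∈ E(T) \ {s,t}` lies in exactly one sending and one receiving cycle of `T`,
`s` lies in exactly `k` sending and no receiving cycles, `t` in exactly `k`
receiving and no sending cycles; consequently, if `ω'` is obtained from `ω` by
using `T` with weight `w`, the total weight on each edge `e` changes by
`-w·𝟙[e = s] + w·𝟙[e = t]`. -/
theorem stmt13 (k ℓ : ℕ) (hk : 2 ≤ k)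
    (E : Finset (Finset V))
    (s t : Fin k → V) (hs : Function.Injective s)
    (ht : Function.Injective t)
    (hst : Disjoint (Finset.univ.image s) (Finset.univ.image t))
    (v : ZMod (k * ℓ) → V)
    (hvis_s : ∀ i < k, ∀ j : Fin k,
      v ((i * ℓ + j.1 : ℕ) : ZMod (k * ℓ)) = s ⟨(i + j.1) % k, Nat.mod_lt _ (by omega)⟩)
    (hvis_t : ∀ i < k, ∀ j : Fin k,
      v ((i * ℓ + ℓ / 2 + j.1 : ℕ) : ZMod (k * ℓ)) = t ⟨(i + j.1) % k, Nat.mod_lt _ (by omega)⟩)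
    (hself : ∀ i < k, ∀ a < ℓ, ∀ b < ℓ, a ≠ b →
      v ((i * ℓ + a : ℕ) : ZMod (k * ℓ)) ≠ v ((i * ℓ + b : ℕ) : ZMod (k * ℓ)))
    (hmeet : ∀ i < k, ∀ i' < k, i ≠ i' → ∀ a < ℓ, ∀ b < ℓ,
      v ((i * ℓ + a : ℕ) : ZMod (k * ℓ)) = v ((i' * ℓ + b : ℕ) : ZMod (k * ℓ)) →
      v ((i * ℓ + a : ℕ) : ZMod (k * ℓ)) ∈ Finset.univ.image s ∪ Finset.univ.image t)
    (ω ω' : Finset (Finset V) → ℝ) (w : ℝ)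
    (hω' : ∀ C, ω' C = ω C + (w / (k : ℝ)) *
      ((((Finset.range k).filter fun i => RC k ℓ v i = C).card : ℝ) -
       (((Finset.range k).filter fun i => SC k ℓ v i = C).card : ℝ))) :
    (∀ e ∈ ET k ℓ v, e ≠ Finset.univ.image s → e ≠ Finset.univ.image t →
      ((Finset.range k).filter fun i => e ∈ SC k ℓ v i).card = 1 ∧
      ((Finset.range k).filter fun i => e ∈ RC k ℓ v i).card = 1) ∧
    (((Finset.range k).filter fun i => Finset.univ.image s ∈ SC k ℓ v i).card = k ∧
     ((Finset.range k).filter fun i => Finset.univ.image s ∈ RC k ℓ v i).card = 0) ∧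
    (((Finset.range k).filter fun i => Finset.univ.image t ∈ RC k ℓ v i).card = k ∧
     ((Finset.range k).filter fun i => Finset.univ.image t ∈ SC k ℓ v i).card = 0) ∧
    (∀ e ∈ E, ∑ C : Finset (Finset V), (if e ∈ C then ω' C else 0) =
      (∑ C : Finset (Finset V), (if e ∈ C then ω C else 0)) -
      (if e = Finset.univ.image s then w else 0) +
      (if e = Finset.univ.image t then w else 0)) := by
  have hT : IsTransporter k ℓ s t v := ⟨hk, hs, ht, hst, hvis_s, hvis_t, hself, hmeet⟩
  refine ⟨fun e he hes het => hT.card_SC_eq_one_and_card_RC_eq_one he hes het,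
    ⟨hT.card_image_s_mem_SC, hT.card_image_s_mem_RC⟩,
    ⟨hT.card_image_t_mem_RC, hT.card_image_t_mem_SC⟩, fun e _ => ?_⟩
  rw [sum_ite_mem_eq_add hω' e, hT.card_RC_sub_card_SC e]
  have hk0 : (k : ℝ) ≠ 0 := Nat.cast_ne_zero.2 (by omega)
  split_ifs <;> field_simp <;> ring

end Stmt13
end
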